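/- Let α, β, γ, δ, ε, κ (=ϰ), λ, μ, ν be real numbers satisfying μ > 0, α > 0, γ > 0, ε > 0, 3λ+2μ > 0, μγ − κ² > 0, αε − ν² > 0, (μ+α)(γ+ε) − (κ+ν)² > 0, and (3λ+2μ)(3β+2γ) − (3δ+2κ)² > 0. Let Ω ⊆ ℝ³ be open and connected and let u, ω : Ω → ℝ³ be continuously differentiable. Define u_{pq}(x) = ∂ₚu_q(x) − Σ_{k=1}^{3} ε_{pqk} ω_k(x) and ω_{pq}(x) = ∂ₚω_q(x), and set E(U,U)(x) := Σ_{p,q=1}^{3} [ (μ+α)u_{pq}² + (μ−α)u_{pq}u_{qp} + 2(κ+ν)u_{pq}ω_{pq} + 2(κ−ν)u_{pq}ω_{qp} + (γ+ε)ω_{pq}² + (γ−ε)ω_{pq}ω_{qp} + 2δ u_{pp}ω_{qq} + λ u_{pp}u_{qq} + β ω_{pp}ω_{qq} ](x). Then E(U,U)(x) = 0 for all x ∈ Ω if and only if there exist constant vectors a, b ∈ ℝ³ with u(x) = a × x + b and ω(x) = a for all x ∈ Ω. -/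

import Mathlib

/-- The Levi-Civitá permutation symbol on indices `{0,1,2}` (as reals). -/
noncomputable def leviCivita (p q k : Fin 3) : ℝ :=
  (((q : ℤ) - (p : ℤ)) * ((k : ℤ) - (p : ℤ)) * ((k : ℤ) - (q : ℤ)) : ℤ) / 2

/-- The strain tensor `u_{pq}(U) = ∂ₚu_q − Σ_k ε_{pqk} ω_k` of the pair `(u, ω)`. -/
noncomputable def strainTensor (u ω : (Fin 3 → ℝ) → (Fin 3 → ℝ))
    (x : Fin 3 → ℝ) (p q : Fin 3) : ℝ :=
  fderiv ℝ u x (Pi.single p 1) q - ∑ k : Fin 3, leviCivita p q k * ω x k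

/-- The torsion (curvature) tensor `ω_{pq}(U) = ∂ₚω_q`. -/
noncomputable def torsionTensor (ω : (Fin 3 → ℝ) → (Fin 3 → ℝ))
    (x : Fin 3 → ℝ) (p q : Fin 3) : ℝ :=
  fderiv ℝ ω x (Pi.single p 1) q

/-- The hemitropic potential energy density evaluated on tensors `ξ`, `η`. -/
noncomputable def energyDensity (α β γ δ ε κ lam μ ν : ℝ)
    (ξ η : Fin 3 → Fin 3 → ℝ) : ℝ :=
  ∑ p : Fin 3, ∑ q : Fin 3,
    ((μ + α) * ξ p q ^ 2 + (μ - α) * ξ p q * ξ q p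
      + 2 * (κ + ν) * ξ p q * η p q + 2 * (κ - ν) * ξ p q * η q p
      + (γ + ε) * η p q ^ 2 + (γ - ε) * η p q * η q p
      + 2 * δ * ξ p p * η q q + lam * ξ p p * ξ q q + β * η p p * η q q)

/-!
Splitting a tensor into its trace, its traceless symmetric part and its skew part turns
`E(U,U)` into a sum of binary quadratic forms in corresponding components of the strain and
torsion tensors, with coefficient matrices `[[3λ+2μ, 3δ+2κ], [3δ+2κ, 3β+2γ]]`, `[[μ, κ], [κ, γ]]`
and `[[α, ν], [ν, ε]]`, all positive definite. So `E(U,U) = 0` exactly when both tensors vanish,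
i.e. `∇ω = 0` and `∇u = [ω × ·]`; on a connected open set this means that `ω ≡ a` and that
`u - [a × ·]` is constant.
-/

def quadForm (A B C x y : ℝ) : ℝ := A * x ^ 2 + 2 * B * x * y + C * y ^ 2

section QuadForm

variable {A B C : ℝ} {ι : Type*} [Fintype ι]

lemma mul_quadForm_eq (x y : ℝ) :
    A * quadForm A B C x y = (A * x + B * y) ^ 2 + (A * C - B ^ 2) * y ^ 2 := by
  unfold quadForm; ring

lemma quadForm_nonneg (hA : 0 < A) (hD : 0 < A * C - B ^ 2) (x y : ℝ) :
    0 ≤ quadForm A B C x y := by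
  refine nonneg_of_mul_nonneg_right ?_ hA
  rw [mul_quadForm_eq]
  positivity

lemma eq_zero_of_quadForm_eq_zero (hA : 0 < A) (hD : 0 < A * C - B ^ 2) {x y : ℝ}
    (h : quadForm A B C x y = 0) : x = 0 ∧ y = 0 := by
  have hsum := mul_quadForm_eq (A := A) (B := B) (C := C) x y
  rw [h, mul_zero, eq_comm, add_eq_zero_iff_of_nonneg (sq_nonneg _) (by positivity)] at hsum
  have hy : y = 0 := by simpa [hD.ne'] using hsum.2
  subst hy
  simpa [hA.ne'] using hsum.1

def tensorQuadForm (A B C : ℝ) (ξ η : ι → ι → ℝ) : ℝ :=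
  ∑ p, ∑ q, quadForm A B C (ξ p q) (η p q)

lemma tensorQuadForm_nonneg (hA : 0 < A) (hD : 0 < A * C - B ^ 2) (ξ η : ι → ι → ℝ) :
    0 ≤ tensorQuadForm A B C ξ η :=
  Finset.sum_nonneg fun _ _ ↦ Finset.sum_nonneg fun _ _ ↦ quadForm_nonneg hA hD _ _

lemma eq_zero_of_tensorQuadForm_eq_zero (hA : 0 < A) (hD : 0 < A * C - B ^ 2)
    {ξ η : ι → ι → ℝ} (h : tensorQuadForm A B C ξ η = 0) : ξ = 0 ∧ η = 0 := by
  have hpq : ∀ p q, quadForm A B C (ξ p q) (η p q) = 0 := fun p q ↦ by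
    rw [tensorQuadForm, Finset.sum_eq_zero_iff_of_nonneg fun _ _ ↦
      Finset.sum_nonneg fun _ _ ↦ quadForm_nonneg hA hD _ _] at h
    exact (Finset.sum_eq_zero_iff_of_nonneg fun _ _ ↦ quadForm_nonneg hA hD _ _).1
      (h p (Finset.mem_univ p)) q (Finset.mem_univ q)
  exact ⟨funext₂ fun p q ↦ (eq_zero_of_quadForm_eq_zero hA hD (hpq p q)).1,
    funext₂ fun p q ↦ (eq_zero_of_quadForm_eq_zero hA hD (hpq p q)).2⟩

end QuadForm

def tensorTrace (ξ : Fin 3 → Fin 3 → ℝ) : ℝ := ∑ p, ξ p p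

noncomputable def deviator (ξ : Fin 3 → Fin 3 → ℝ) (p q : Fin 3) : ℝ :=
  (ξ p q + ξ q p) / 2 - if p = q then tensorTrace ξ / 3 else 0

noncomputable def skewPart (ξ : Fin 3 → Fin 3 → ℝ) (p q : Fin 3) : ℝ := (ξ p q - ξ q p) / 2

lemma eq_zero_of_tensorTrace_deviator_skewPart {ξ : Fin 3 → Fin 3 → ℝ} (htr : tensorTrace ξ = 0)
    (hdev : deviator ξ = 0) (hskew : skewPart ξ = 0) : ξ = 0 := by
  funext p q
  have hd := congrFun₂ hdev p q
  have hs := congrFun₂ hskew p q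
  simp only [deviator, skewPart, htr, zero_div, ite_self, sub_zero, Pi.zero_apply] at hd hs
  simp only [Pi.zero_apply]
  linarith

lemma energyDensity_eq_add_tensorQuadForm (α β γ δ ε κ lam μ ν : ℝ) (ξ η : Fin 3 → Fin 3 → ℝ) :
    energyDensity α β γ δ ε κ lam μ ν ξ η =
      quadForm (3 * lam + 2 * μ) (3 * δ + 2 * κ) (3 * β + 2 * γ) (tensorTrace ξ) (tensorTrace η) / 3
      + 2 * tensorQuadForm μ κ γ (deviator ξ) (deviator η)
      + 2 * tensorQuadForm α ν ε (skewPart ξ) (skewPart η) := by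
  simp only [energyDensity, tensorQuadForm, quadForm, tensorTrace, deviator, skewPart,
    Fin.sum_univ_three, Fin.isValue, Fin.reduceEq, ↓reduceIte]
  ring

lemma eq_zero_of_energyDensity_eq_zero {α β γ δ ε κ lam μ ν : ℝ}
    (hμ : 0 < μ) (hα : 0 < α) (hlamμ : 0 < 3 * lam + 2 * μ)
    (hμγ : 0 < μ * γ - κ ^ 2) (hαε : 0 < α * ε - ν ^ 2)
    (hlamβ : 0 < (3 * lam + 2 * μ) * (3 * β + 2 * γ) - (3 * δ + 2 * κ) ^ 2)
    {ξ η : Fin 3 → Fin 3 → ℝ} (h : energyDensity α β γ δ ε κ lam μ ν ξ η = 0) :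
    ξ = 0 ∧ η = 0 := by
  have htr := quadForm_nonneg hlamμ hlamβ (tensorTrace ξ) (tensorTrace η)
  have hdev := tensorQuadForm_nonneg hμ hμγ (deviator ξ) (deviator η)
  have hskew := tensorQuadForm_nonneg hα hαε (skewPart ξ) (skewPart η)
  rw [energyDensity_eq_add_tensorQuadForm] at h
  obtain ⟨htrξ, htrη⟩ := eq_zero_of_quadForm_eq_zero hlamμ hlamβ (by linarith)
  obtain ⟨hdevξ, hdevη⟩ := eq_zero_of_tensorQuadForm_eq_zero hμ hμγ (by linarith)
  obtain ⟨hskewξ, hskewη⟩ := eq_zero_of_tensorQuadForm_eq_zero hα hαε (by linarith)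
  exact ⟨eq_zero_of_tensorTrace_deviator_skewPart htrξ hdevξ hskewξ,
    eq_zero_of_tensorTrace_deviator_skewPart htrη hdevη hskewη⟩

lemma continuousLinearMap_ext_single {n : ℕ} {F : Type*} [NormedAddCommGroup F] [NormedSpace ℝ F]
    {L M : (Fin n → ℝ) →L[ℝ] F} (h : ∀ p, L (Pi.single p 1) = M (Pi.single p 1)) : L = M :=
  ContinuousLinearMap.coe_injective <| (Pi.basisFun ℝ (Fin n)).ext fun p ↦ by simpa using h p

noncomputable def crossProductCLM (a : Fin 3 → ℝ) : (Fin 3 → ℝ) →L[ℝ] (Fin 3 → ℝ) :=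
  LinearMap.toContinuousLinearMap (crossProduct a)

@[simp]
lemma crossProductCLM_apply (a v : Fin 3 → ℝ) : crossProductCLM a v = crossProduct a v := rfl

open Matrix in
lemma crossProduct_single_one_apply (a : Fin 3 → ℝ) (p q : Fin 3) :
    crossProduct a (Pi.single p 1) q = ∑ k, leviCivita p q k * a k := by
  fin_cases p <;> fin_cases q <;>
    simp [cross_apply, leviCivita, Fin.sum_univ_three] <;> norm_num

section Kinematics

variable {u ω : (Fin 3 → ℝ) → (Fin 3 → ℝ)} {x : Fin 3 → ℝ}

lemma torsionTensor_eq_zero_iff : torsionTensor ω x = 0 ↔ fderiv ℝ ω x = 0 := by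
  refine ⟨fun h ↦ continuousLinearMap_ext_single fun p ↦ funext fun q ↦ congrFun₂ h p q,
    fun h ↦ ?_⟩
  funext p q
  simp [torsionTensor, h]

lemma strainTensor_eq_zero_iff : strainTensor u ω x = 0 ↔ fderiv ℝ u x = crossProductCLM (ω x) := by
  simp only [funext_iff, strainTensor, Pi.zero_apply, sub_eq_zero, ← crossProduct_single_one_apply]
  exact ⟨fun h ↦ continuousLinearMap_ext_single fun p ↦ funext (h p), fun h p q ↦ by simp [h]⟩

lemma strainTensor_eq_zero_and_torsionTensor_eq_zero_of_rigid {Ω : Set (Fin 3 → ℝ)}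
    (hΩ : IsOpen Ω) {a b : Fin 3 → ℝ} (h : ∀ y ∈ Ω, u y = crossProduct a y + b ∧ ω y = a)
    (hx : x ∈ Ω) : strainTensor u ω x = 0 ∧ torsionTensor ω x = 0 := by
  have hu : u =ᶠ[nhds x] fun y ↦ crossProductCLM a y + b :=
    Filter.eventually_of_mem (hΩ.mem_nhds hx) fun y hy ↦ (h y hy).1
  have hω : ω =ᶠ[nhds x] fun _ ↦ a :=
    Filter.eventually_of_mem (hΩ.mem_nhds hx) fun y hy ↦ (h y hy).2
  refine ⟨strainTensor_eq_zero_iff.2 ?_, torsionTensor_eq_zero_iff.2 ?_⟩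
  · rw [hu.fderiv_eq, fderiv_add_const, ContinuousLinearMap.fderiv, (h x hx).2]
  · rw [hω.fderiv_eq, fderiv_const_apply]

end Kinematics

theorem energyDensity_eq_zero_iff_rigid_displacement_general
    (α β γ δ ε κ lam μ ν : ℝ)
    (hμ : 0 < μ) (hα : 0 < α)
    (hlamμ : 0 < 3 * lam + 2 * μ)
    (hμγ : 0 < μ * γ - κ ^ 2) (hαε : 0 < α * ε - ν ^ 2)
    (hlamβ : 0 < (3 * lam + 2 * μ) * (3 * β + 2 * γ) - (3 * δ + 2 * κ) ^ 2)
    (Ω : Set (Fin 3 → ℝ)) (hΩopen : IsOpen Ω) (hΩconn : IsConnected Ω)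
    (u ω : (Fin 3 → ℝ) → (Fin 3 → ℝ))
    (hu : ContDiffOn ℝ 1 u Ω) (hω : ContDiffOn ℝ 1 ω Ω) :
    (∀ x ∈ Ω, energyDensity α β γ δ ε κ lam μ ν
        (strainTensor u ω x) (torsionTensor ω x) = 0)
    ↔ ∃ a b : Fin 3 → ℝ, ∀ x ∈ Ω, u x = crossProduct a x + b ∧ ω x = a := by
  constructor
  · intro hE
    have hzero : ∀ x ∈ Ω, strainTensor u ω x = 0 ∧ torsionTensor ω x = 0 := fun x hx ↦
      eq_zero_of_energyDensity_eq_zero hμ hα hlamμ hμγ hαε hlamβ (hE x hx)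
    obtain ⟨a, ha⟩ := hΩopen.exists_is_const_of_fderiv_eq_zero hΩconn.isPreconnected
      (hω.differentiableOn one_ne_zero) fun x hx ↦ torsionTensor_eq_zero_iff.1 (hzero x hx).2
    obtain ⟨b, hb⟩ := hΩopen.exists_eq_add_of_fderiv_eq hΩconn.isPreconnected
      (hu.differentiableOn one_ne_zero) (crossProductCLM a).differentiableOn fun x hx ↦ by
        rw [(crossProductCLM a).fderiv, ← ha x hx]
        exact strainTensor_eq_zero_iff.1 (hzero x hx).1
    exact ⟨a, b, fun x hx ↦ ⟨hb hx, ha x hx⟩⟩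
  · rintro ⟨a, b, h⟩ x hx
    obtain ⟨hstrain, htorsion⟩ :=
      strainTensor_eq_zero_and_torsionTensor_eq_zero_of_rigid hΩopen h hx
    rw [hstrain, htorsion]
    simp [energyDensity]

/-- Lemma 2.1 of the paper: under the positive definiteness conditions on the
material constants, the energy density `E(U,U)` of a `C¹` pair `(u, ω)` vanishes
identically on an open connected set `Ω ⊆ ℝ³` if and only if `(u, ω)` is a
generalized rigid displacement vector `([a × x] + b, a)`. -/
theorem energyDensity_eq_zero_iff_rigid_displacement
    (α β γ δ ε κ lam μ ν : ℝ)
    (hμ : 0 < μ) (hα : 0 < α) (hγ : 0 < γ) (hε : 0 < ε)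
    (hlamμ : 0 < 3 * lam + 2 * μ)
    (hμγ : 0 < μ * γ - κ ^ 2) (hαε : 0 < α * ε - ν ^ 2)
    (hμαγε : 0 < (μ + α) * (γ + ε) - (κ + ν) ^ 2)
    (hlamβ : 0 < (3 * lam + 2 * μ) * (3 * β + 2 * γ) - (3 * δ + 2 * κ) ^ 2)
    (Ω : Set (Fin 3 → ℝ)) (hΩopen : IsOpen Ω) (hΩconn : IsConnected Ω)
    (u ω : (Fin 3 → ℝ) → (Fin 3 → ℝ))
    (hu : ContDiffOn ℝ 1 u Ω) (hω : ContDiffOn ℝ 1 ω Ω) :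
    (∀ x ∈ Ω, energyDensity α β γ δ ε κ lam μ ν
        (strainTensor u ω x) (torsionTensor ω x) = 0)
    ↔ ∃ a b : Fin 3 → ℝ, ∀ x ∈ Ω, u x = crossProduct a x + b ∧ ω x = a :=
  energyDensity_eq_zero_iff_rigid_displacement_general α β γ δ ε κ lam μ ν hμ hα hlamμ hμγ hαε hlamβ
    Ω hΩopen hΩconn u ω hu hω
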